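/- arXiv:2309.08275 — 2 statements merged into one kernel-verified Lean document; each statement's English description precedes it below -/
import Mathlib

section
/- Let n be a positive integer and let h, w ∈ ℂⁿ. If for every vector v ∈ ℂⁿ the squared magnitudes of the inner products agree, i.e. |vᴴw|² = |vᴴh|², then there exists a phase φ ∈ ℝ such that h = e^{iφ}·w (where e^{iφ} denotes the complex exponential). In particular, the two vectors differ only by a common unimodular scalar. -/
/-- Complex-vector core of Lemma 1: if `|vᴴw|² = |vᴴh|²` for all `v ∈ ℂⁿ`,
then `h = e^{iφ} w` for some phase `φ`. -/
theorem channel_determined_up_to_phase (n : ℕ) (hn : 0 < n) (h w : Fin n → ℂ)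
    (hpow : ∀ v : Fin n → ℂ,
      ‖∑ i, (starRingEnd ℂ) (v i) * w i‖ ^ 2 =
        ‖∑ i, (starRingEnd ℂ) (v i) * h i‖ ^ 2) :
    ∃ φ : ℝ, h = fun i => Complex.exp (φ * Complex.I) * w i := by
  classical
  let W : EuclideanSpace ℂ (Fin n) := WithLp.toLp 2 w
  let H : EuclideanSpace ℂ (Fin n) := WithLp.toLp 2 h
  have key : ∀ v : EuclideanSpace ℂ (Fin n),
      ‖(inner ℂ v W : ℂ)‖ = ‖(inner ℂ v H : ℂ)‖ := by
    intro v
    have h2' : ‖∑ i, (starRingEnd ℂ) (v i) * w i‖ =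
        ‖∑ i, (starRingEnd ℂ) (v i) * h i‖ := by
      nlinarith [norm_nonneg (∑ i, (starRingEnd ℂ) (v i) * w i),
        norm_nonneg (∑ i, (starRingEnd ℂ) (v i) * h i),
        hpow v]
    simpa [PiLp.inner_apply, W, H, mul_comm] using h2'
  by_cases hw : W = 0
  · have hH0 : (inner ℂ H H : ℂ) = 0 := by
      have := key H
      rw [hw, inner_zero_right] at this
      simpa using this.symm
    have hH : H = 0 := inner_self_eq_zero.mp hH0
    refine ⟨0, ?_⟩
    funext i
    have h1 : h i = 0 := by simpa [H] using congrArg (fun x => x i) hH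
    have h2 : w i = 0 := by simpa [W] using congrArg (fun x => x i) hw
    simp [h1, h2]
  · have hH : H ≠ 0 := by
      intro h0
      have hk := key W
      rw [h0, inner_zero_right] at hk
      have h0' : ‖(inner ℂ W W : ℂ)‖ = 0 := by simpa using hk
      exact hw (inner_self_eq_zero.mp (norm_eq_zero.mp h0'))
    have hWn : (0:ℝ) < ‖W‖ := norm_pos_iff.mpr hw
    have hHn : (0:ℝ) < ‖H‖ := norm_pos_iff.mpr hH
    have kH : ‖(inner ℂ H W : ℂ)‖ = ‖H‖ ^ 2 := by
      rw [key H, inner_self_eq_norm_sq_to_K (𝕜 := ℂ) H]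
      simp
    have kW : ‖(inner ℂ W H : ℂ)‖ = ‖W‖ ^ 2 := by
      rw [← key W, inner_self_eq_norm_sq_to_K (𝕜 := ℂ) W]
      simp
    have cs1 : ‖(inner ℂ H W : ℂ)‖ ≤ ‖H‖ * ‖W‖ := norm_inner_le_norm H W
    have cs2 : ‖(inner ℂ W H : ℂ)‖ ≤ ‖W‖ * ‖H‖ := norm_inner_le_norm W H
    have hnorm : ‖H‖ = ‖W‖ := by
      nlinarith
    have heq : ‖(inner ℂ H W : ℂ)‖ = ‖H‖ * ‖W‖ := by
      rw [kH, hnorm]; ring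
    obtain ⟨r, hr0, hrw⟩ := (norm_inner_eq_norm_iff hH hw).mp heq
    -- W = r • H
    have habs : ‖r‖ = 1 := by
      have : ‖W‖ = ‖r‖ * ‖H‖ := by rw [hrw, norm_smul]
      rw [hnorm] at this
      have hr1 : ‖r‖ = 1 :=
        mul_right_cancel₀ (ne_of_gt hHn) (by rw [one_mul, hnorm]; linarith)
      simpa using hr1
    set c : ℂ := r⁻¹ with hc
    have hcabs : ‖c‖ = 1 := by
      simp [hc, habs]
    refine ⟨Complex.arg c, ?_⟩
    have hcexp : Complex.exp ((Complex.arg c : ℂ) * Complex.I) = c := by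
      have := Complex.norm_mul_exp_arg_mul_I c
      rwa [hcabs, Complex.ofReal_one, one_mul] at this
    funext i
    have hwi : w i = r * h i := by simpa [W, H] using congrArg (fun x => x i) hrw
    rw [hcexp]
    have : h i = c * w i := by
      rw [hwi, hc]
      field_simp
    exact this
end

section
/- Let n be a positive integer, let h ∈ ℂⁿ and w₁, w₂ ∈ ℝⁿ, and set w = w₁ + i·w₂ ∈ ℂⁿ. For v ∈ ℂⁿ let x = (Re v; Im v) ∈ ℝ^{2n}, let R ∈ ℝ^{2n×2} have columns (Re h; Im h) and (Im h; −Re h), and let W ∈ ℝ^{2n×2} have columns (w₁; w₂) and (w₂; −w₁). If ‖xᵀW‖² = ‖xᵀR‖² holds for every x of the form (Re v; Im v) with v ∈ ℂⁿ (equivalently, for every v ∈ ℂⁿ), then there exists a phase φ ∈ ℝ such that h = e^{iφ}·w. -/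
/-- Lemma 1 of the paper: if the structured real weight matrix `W` (built from
`w₁, w₂ ∈ ℝⁿ`) reproduces the received-power map `‖xᵀR‖²` of the true channel `h`
for every input `x = (Re v; Im v)`, then `h = e^{iφ}·(w₁ + i w₂)` for some phase `φ`. -/
theorem lemma1_NN_weights_recover_channel_up_to_phase (n : ℕ) (hn : 0 < n)
    (h : Fin n → ℂ) (w₁ w₂ : Fin n → ℝ) (w : Fin n → ℂ)
    (hw : w = fun i => (w₁ i : ℂ) + (w₂ i : ℂ) * Complex.I)
    (R W : Matrix (Fin n ⊕ Fin n) (Fin 2) ℝ)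
    (hR : R = Matrix.of (Sum.elim (fun i => ![(h i).re, (h i).im])
      (fun i => ![(h i).im, -(h i).re])))
    (hW : W = Matrix.of (Sum.elim (fun i => ![w₁ i, w₂ i])
      (fun i => ![w₂ i, -(w₁ i)])))
    (heq : ∀ v : Fin n → ℂ,
      let x : Fin n ⊕ Fin n → ℝ := Sum.elim (fun i => (v i).re) (fun i => (v i).im)
      (Matrix.vecMul x W 0) ^ 2 + (Matrix.vecMul x W 1) ^ 2 =
        (Matrix.vecMul x R 0) ^ 2 + (Matrix.vecMul x R 1) ^ 2) :
    ∃ φ : ℝ, h = fun i => Complex.exp (φ * Complex.I) * w i := by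
  subst hR hW
  set wc : Fin n → ℂ := fun i => (w₁ i : ℂ) + (w₂ i : ℂ) * Complex.I with hwc
  have key : ∀ v : Fin n → ℂ,
      Complex.normSq (∑ i, (starRingEnd ℂ) (v i) * wc i) =
      Complex.normSq (∑ i, (starRingEnd ℂ) (v i) * h i) := by
    intro v
    have H := heq v
    simp only [Matrix.vecMul, dotProduct, Fintype.sum_sum_type, Sum.elim_inl,
      Sum.elim_inr, Matrix.of_apply, Matrix.cons_val_zero, Matrix.cons_val_one,
      Matrix.head_cons] at H
    simp only [Complex.normSq_apply, Complex.re_sum, Complex.im_sum, Complex.mul_re,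
      Complex.mul_im, Complex.add_re, Complex.add_im, Complex.ofReal_re, Complex.ofReal_im,
      Complex.mul_I_re, Complex.mul_I_im, Complex.conj_re, Complex.conj_im, hwc,
      Complex.I_re, Complex.I_im, mul_zero, mul_one, zero_mul, add_zero, zero_add, sub_zero,
      neg_mul, mul_neg, neg_neg, Finset.sum_add_distrib, Finset.sum_sub_distrib,
      Finset.sum_neg_distrib] at H ⊢
    ring_nf at H ⊢
    linarith [H]
  -- norm equality
  have norm_eq : ∀ j, Complex.normSq (wc j) = Complex.normSq (h j) := by
    intro j
    have := key (Pi.single j 1)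
    simpa [Pi.single_apply, apply_ite (starRingEnd ℂ), Finset.sum_ite_eq'] using this
  have cross : ∀ j k, (starRingEnd ℂ) (wc j) * wc k = (starRingEnd ℂ) (h j) * h k := by
    intro j k
    rcases eq_or_ne j k with rfl | hjk
    · have := norm_eq j
      rw [← Complex.normSq_eq_conj_mul_self, ← Complex.normSq_eq_conj_mul_self]
      exact_mod_cast congrArg (Complex.ofReal) this
    · have e1 := key (Pi.single j 1 + Pi.single k 1)
      have e2 := key (Pi.single j 1 + Pi.single k Complex.I)
      have s1 : ∀ (u : Fin n → ℂ) (β : ℂ),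
          (∑ i, (starRingEnd ℂ) ((Pi.single j 1 + Pi.single k β : Fin n → ℂ) i) * u i) =
          u j + (starRingEnd ℂ) β * u k := by
        intro u β
        simp only [Pi.add_apply, Pi.single_apply, map_add, add_mul]
        rw [Finset.sum_add_distrib]
        congr 1
        · simp [apply_ite (starRingEnd ℂ), Finset.sum_ite_eq']
        · simp [apply_ite (starRingEnd ℂ), Finset.sum_ite_eq', hjk]
      rw [s1, s1] at e1
      rw [s1, s1] at e2
      have n1 := norm_eq j
      have n2 := norm_eq k
      simp only [map_one, one_mul, Complex.normSq_apply, Complex.add_re, Complex.add_im,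
        Complex.mul_re, Complex.mul_im, Complex.conj_re, Complex.conj_im,
        Complex.I_re, Complex.I_im, Complex.one_re, Complex.one_im,
        mul_zero, mul_one, zero_mul, add_zero, zero_add, sub_zero, neg_mul, neg_neg,
        neg_zero, zero_sub, sub_neg_eq_add] at e1 e2 n1 n2
      apply Complex.ext <;>
        simp only [Complex.mul_re, Complex.mul_im, Complex.conj_re, Complex.conj_im] <;>
        · ring_nf at e1 e2 n1 n2 ⊢
          linarith [e1, e2, n1, n2]
  -- conclude
  by_cases hz : ∀ k, h k = 0
  · refine ⟨0, funext fun k => ?_⟩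
    have hwk : wc k = 0 := by
      have := norm_eq k
      rw [hz k] at this
      simpa using (Complex.normSq_eq_zero.mp (by simpa using this))
    rw [hz k, hw]
    simp only [← hwc, hwk, mul_zero]
  · push_neg at hz
    obtain ⟨j, hj⟩ := hz
    have hwj : wc j ≠ 0 := by
      intro h0
      apply hj
      have := norm_eq j
      rw [h0] at this
      exact Complex.normSq_eq_zero.mp (by simpa using this.symm)
    have habs : ‖h j / wc j‖ = 1 := by
      rw [norm_div]
      rw [div_eq_one_iff_eq (by simpa using hwj)]
      have := norm_eq j
      rw [← Complex.sq_norm, ← Complex.sq_norm] at this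
      nlinarith [norm_nonneg (h j), norm_nonneg (wc j)]
    obtain ⟨φ, hφ⟩ := (Complex.norm_eq_one_iff _).mp habs
    refine ⟨φ, funext fun k => ?_⟩
    rw [hw]
    simp only [← hwc, hφ]
    rw [div_mul_eq_mul_div, eq_div_iff hwj]
    -- goal : h k * wc j = h j * wc k
    have c1 := cross j k
    have nj : (starRingEnd ℂ) (wc j) * wc j = (starRingEnd ℂ) (h j) * h j := cross j j
    have hcj : (starRingEnd ℂ) (h j) ≠ 0 := by simpa using hj
    apply mul_left_cancel₀ hcj
    calc (starRingEnd ℂ) (h j) * (h k * wc j)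
        = ((starRingEnd ℂ) (h j) * h k) * wc j := by ring
      _ = ((starRingEnd ℂ) (wc j) * wc k) * wc j := by rw [c1]
      _ = ((starRingEnd ℂ) (wc j) * wc j) * wc k := by ring
      _ = ((starRingEnd ℂ) (h j) * h j) * wc k := by rw [nj]
      _ = (starRingEnd ℂ) (h j) * (h j * wc k) := by ring
end
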